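/- For any n ≥ 1 and p ∈ (0,1), if S ~ Binomial(n,p) and m is an integer with m ≥ np, then P(S ≤ m) ≥ 1/2. -/

import Mathlib

/-- pmf of the Binomial(n,p) distribution. -/
noncomputable def binomPMF (n : ℕ) (p : ℝ) (s : ℕ) : ℝ :=
  (n.choose s : ℝ) * p ^ s * (1 - p) ^ (n - s)

/-- CDF of the Binomial(n,p) distribution: P(S ≤ m). -/
noncomputable def binomCDF (n : ℕ) (p : ℝ) (m : ℕ) : ℝ :=
  ∑ s ∈ Finset.range (m + 1), binomPMF n p s

/-!
`P(S ≤ m)` is non-increasing in `p`, so it suffices to take `p = m / n`, where the mean is the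
integer `m`. Write `n = m + r + 1`.

If `r ≤ m`, comparing successive ratios of the pmf at `p = m / n` shows that every atom
`P(S = m + 1 + t)` of the upper tail is at most its mirror image `P(S = m - t)`.

If `m ≤ r + 1`, then `p ≤ 1 / 2`, and `P(S ≤ m) = n C(n - 1, m) ∫_p^1 t^m (1 - t)^r dt`.
As `p` lies to the left of the mode `m / (m + r)` and `p ≤ 1 / 2`, the log-derivative of the
integrand shows that it is larger at `p + s` than at `p - s`; hence `∫_0^p ≤ ∫_p^{2p} ≤ ∫_p^1`.
-/

open Finset Polynomial

lemma binomPMF_eq_eval (n s : ℕ) (p : ℝ) :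
    binomPMF n p s = (bernsteinPolynomial ℝ n s).eval p := by
  simp [binomPMF, bernsteinPolynomial]

lemma binomPMF_nonneg (n s : ℕ) {p : ℝ} (hp : p ∈ Set.Icc (0 : ℝ) 1) :
    0 ≤ binomPMF n p s := by
  have := hp.1
  have := sub_nonneg.2 hp.2
  unfold binomPMF
  positivity

lemma sum_binomPMF (n : ℕ) (p : ℝ) : ∑ s ∈ range (n + 1), binomPMF n p s = 1 := by
  simp_rw [binomPMF_eq_eval, ← eval_finsetSum, bernsteinPolynomial.sum, eval_one]

lemma binomCDF_of_le {n m : ℕ} (h : n ≤ m) (p : ℝ) : binomCDF n p m = 1 := by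
  rw [binomCDF, ← sum_subset (range_subset_range.2 (Nat.succ_le_succ h)), sum_binomPMF]
  intro s _ hs
  rw [binomPMF, Nat.choose_eq_zero_of_lt (by simpa using hs)]
  simp

lemma binomCDF_zero (n m : ℕ) : binomCDF n 0 m = 1 := by
  rw [binomCDF, sum_eq_single 0] <;> simp +contextual [binomPMF]

lemma binomCDF_one {n m : ℕ} (h : m < n) : binomCDF n 1 m = 0 :=
  sum_eq_zero fun s hs => by
    have : n - s ≠ 0 := by simp at hs; omega
    simp [binomPMF, this]

lemma derivative_sum_bernsteinPolynomial (N m : ℕ) :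
    derivative (∑ ν ∈ range (m + 1), bernsteinPolynomial ℝ (N + 1) ν) =
      -((N + 1 : ℝ[X]) * bernsteinPolynomial ℝ N m) := by
  induction m with
  | zero => simp [bernsteinPolynomial.derivative_zero]; ring
  | succ m ih =>
    rw [sum_range_succ, derivative_add, ih, bernsteinPolynomial.derivative_succ]
    push_cast
    ring

lemma hasDerivAt_binomCDF (N m : ℕ) (x : ℝ) :
    HasDerivAt (fun p => binomCDF (N + 1) p m)
      (-((N + 1) * (bernsteinPolynomial ℝ N m).eval x)) x := by
  have h := (∑ ν ∈ range (m + 1), bernsteinPolynomial ℝ (N + 1) ν).hasDerivAt x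
  simp_rw [derivative_sum_bernsteinPolynomial, eval_neg, eval_mul, eval_finsetSum] at h
  simpa [binomCDF, binomPMF_eq_eval] using h

lemma eval_bernsteinPolynomial_add (m r : ℕ) (x : ℝ) :
    (bernsteinPolynomial ℝ (m + r) m).eval x = (m + r).choose m * (x ^ m * (1 - x) ^ r) := by
  simp [bernsteinPolynomial, mul_assoc]

lemma binomCDF_antitoneOn (n m : ℕ) : AntitoneOn (fun p => binomCDF n p m) (Set.Icc 0 1) := by
  rcases n with _ | N
  · simp [binomCDF_of_le (Nat.zero_le m), antitoneOn_const]
  have hderiv := hasDerivAt_binomCDF N m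
  have hdiff : Differentiable ℝ (fun p => binomCDF (N + 1) p m) :=
    fun x => (hderiv x).differentiableAt
  refine antitoneOn_of_deriv_nonpos (convex_Icc 0 1) hdiff.continuous.continuousOn
    hdiff.differentiableOn fun x hx => ?_
  rw [interior_Icc] at hx
  rw [(hderiv x).deriv, ← binomPMF_eq_eval, neg_nonpos]
  exact mul_nonneg (by positivity) (binomPMF_nonneg N m (Set.Ioo_subset_Icc_self hx))

lemma binomCDF_eq_integral (m r : ℕ) (p : ℝ) :
    binomCDF (m + r + 1) p m =
      (m + r + 1) * (m + r).choose m * ∫ t in p..1, t ^ m * (1 - t) ^ r := by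
  have hftc := intervalIntegral.integral_eq_sub_of_hasDerivAt
    (fun x _ => hasDerivAt_binomCDF (m + r) m x) (Continuous.intervalIntegrable (by fun_prop) p 1)
  simp only [eval_bernsteinPolynomial_add, binomCDF_one (by omega : m < m + r + 1),
    intervalIntegral.integral_neg, intervalIntegral.integral_const_mul] at hftc
  push_cast at hftc ⊢
  linarith

lemma succ_mul_one_sub_mul_binomPMF_succ (n k : ℕ) (p : ℝ) :
    (k + 1) * (1 - p) * binomPMF n p (k + 1) = (n - k : ℕ) * p * binomPMF n p k := by
  have hchoose : (n.choose (k + 1) : ℝ) * (k + 1) = n.choose k * (n - k : ℕ) := by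
    exact_mod_cast Nat.choose_succ_right_eq n k
  rcases lt_or_ge k n with hk | hk
  · obtain ⟨j, rfl⟩ : ∃ j, n = k + 1 + j := ⟨n - k - 1, by omega⟩
    unfold binomPMF
    rw [show k + 1 + j - (k + 1) = j by omega, show k + 1 + j - k = j + 1 by omega] at *
    linear_combination p ^ (k + 1) * (1 - p) ^ (j + 1) * hchoose
  · simp [binomPMF, Nat.choose_eq_zero_of_lt (Nat.lt_succ_of_le hk), Nat.sub_eq_zero_of_le hk]

lemma sub_sq_mul_sq_le (m a u : ℝ) (hm : 0 ≤ m) (hu : 0 ≤ u) (hua : u ≤ a)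
    (ham : a ≤ m + 1) :
    (a ^ 2 - u ^ 2) * m ^ 2 ≤ ((m + 1) ^ 2 - u ^ 2) * a ^ 2 := by
  have hu2 : u ^ 2 ≤ a ^ 2 := pow_le_pow_left₀ hu hua 2
  rcases le_total a m with h | h
  · nlinarith [mul_le_mul h h (by linarith) hm, sq_nonneg u]
  · nlinarith [mul_le_mul hu2 (by nlinarith : a ^ 2 - m ^ 2 ≤ 2 * m + 1) (by nlinarith)
      (sq_nonneg a)]

section Mean

variable (m r : ℕ)

local notation "P" => binomPMF (m + r + 1) (m / (m + r + 1 : ℝ))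

lemma binomPMF_mean_succ (k : ℕ) :
    (k + 1) * (r + 1) * P (k + 1) = (m + r + 1 - k : ℕ) * m * P k := by
  have h := succ_mul_one_sub_mul_binomPMF_succ (m + r + 1) k (m / (m + r + 1 : ℝ))
  have hn : (m + r + 1 : ℝ) ≠ 0 := by positivity
  field_simp at h
  linear_combination h

lemma mean_mem_Icc : (m / (m + r + 1 : ℝ)) ∈ Set.Icc (0 : ℝ) 1 :=
  ⟨by positivity,
    div_le_one_of_le₀ (by linarith [(r.cast_nonneg : (0 : ℝ) ≤ r)]) (by positivity)⟩

lemma binomPMF_mean_add_le_sub (hrm : r ≤ m) {t : ℕ} (ht : t ≤ r) :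
    P (m + 1 + t) ≤ P (m - t) := by
  have hP := fun k => binomPMF_nonneg (m + r + 1) k (mean_mem_Icc m r)
  induction t with
  | zero =>
    have h := binomPMF_mean_succ m r m
    rw [show m + r + 1 - m = r + 1 by omega] at h
    push_cast at h
    simp only [add_zero, Nat.sub_zero]
    refine le_of_mul_le_mul_left ?_ (by positivity : (0 : ℝ) < (m + 1) * (r + 1))
    nlinarith [mul_nonneg (by positivity : (0 : ℝ) ≤ r + 1) (hP m)]
  | succ t ih =>
    have ih := ih (by omega)
    have hright := binomPMF_mean_succ m r (m + 1 + t)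
    have hleft := binomPMF_mean_succ m r (m - (t + 1))
    rw [show m + r + 1 - (m + 1 + t) = r - t by omega, show m - (t + 1) + 1 = m - t by omega,
      show m + r + 1 - (m - (t + 1)) = r + t + 2 by omega] at *
    push_cast [Nat.cast_sub (show t + 1 ≤ m by omega), Nat.cast_sub (show t ≤ r by omega)]
      at hright hleft
    have hscalar := sub_sq_mul_sq_le m (r + 1) (t + 1) (by positivity) (by positivity)
      (by norm_cast; omega) (by norm_cast; omega)
    have hmt : (0 : ℝ) < m - (t + 1 : ℝ) + 1 := by
      have : (t + 1 : ℝ) ≤ m := by norm_cast; omega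
      linarith
    have hpos : (0 : ℝ) < (m + 1 + t + 1) * (m - (t + 1 : ℝ) + 1) * (r + 1) ^ 2 :=
      mul_pos (mul_pos (by positivity) hmt) (by positivity)
    have hrt : (0 : ℝ) ≤ (r - t) * m :=
      mul_nonneg (sub_nonneg.2 (by exact_mod_cast (by omega : t ≤ r))) (by positivity)
    refine le_of_mul_le_mul_left ?_ hpos
    rw [← add_assoc]
    calc (m + 1 + t + 1) * (m - (t + 1 : ℝ) + 1) * (r + 1) ^ 2 * P (m + 1 + t + 1)
        = (m - (t + 1 : ℝ) + 1) * (r + 1) * ((r - t) * m * P (m + 1 + t)) := by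
          linear_combination (m - (t + 1 : ℝ) + 1) * (r + 1) * hright
      _ ≤ (m - (t + 1 : ℝ) + 1) * (r + 1) * ((r - t) * m * P (m - t)) := by
          have := hmt.le
          gcongr
      _ = ((r + 1) ^ 2 - (t + 1) ^ 2) * m ^ 2 * P (m - (t + 1)) := by
          linear_combination (r - t) * m * hleft
      _ ≤ ((m + 1) ^ 2 - (t + 1) ^ 2) * (r + 1) ^ 2 * P (m - (t + 1)) := by
          gcongr
          exact hP _
      _ = (m + 1 + t + 1) * (m - (t + 1 : ℝ) + 1) * (r + 1) ^ 2 * P (m - (t + 1)) := by ring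

lemma half_le_binomCDF_mean_of_le (hrm : r ≤ m) :
    1 / 2 ≤ binomCDF (m + r + 1) (m / (m + r + 1 : ℝ)) m := by
  have htotal := sum_binomPMF (m + r + 1) (m / (m + r + 1 : ℝ))
  rw [show m + r + 1 + 1 = (m + 1) + (r + 1) by ring, sum_range_add] at htotal
  have htail :
      ∑ t ∈ range (r + 1), P (m + 1 + t) ≤ binomCDF (m + r + 1) (m / (m + r + 1 : ℝ)) m :=
    calc ∑ t ∈ range (r + 1), P (m + 1 + t)
        ≤ ∑ t ∈ range (r + 1), P (m - t) :=
          sum_le_sum fun t ht =>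
            binomPMF_mean_add_le_sub m r hrm (Nat.lt_succ_iff.1 (mem_range.1 ht))
      _ ≤ ∑ t ∈ range (m + 1), P (m - t) :=
          sum_le_sum_of_subset_of_nonneg (range_subset_range.2 (by omega))
            fun k _ _ => binomPMF_nonneg _ _ (mean_mem_Icc m r)
      _ = binomCDF (m + r + 1) (m / (m + r + 1 : ℝ)) m := sum_range_reflect _ (m + 1)
  rw [binomCDF] at htail ⊢
  linarith

end Mean

noncomputable def logBetaKernel (m r : ℕ) (t : ℝ) : ℝ := m * Real.log t + r * Real.log (1 - t)

lemma hasDerivAt_logBetaKernel (m r : ℕ) {t : ℝ} (ht : t ∈ Set.Ioo (0 : ℝ) 1) :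
    HasDerivAt (logBetaKernel m r) (m / t - r / (1 - t)) t := by
  have h1 : HasDerivAt (fun t : ℝ => 1 - t) (-1) t := by
    simpa using (hasDerivAt_id t).const_sub 1
  have := ((Real.hasDerivAt_log ht.1.ne').const_mul (m : ℝ)).add
    ((h1.log (sub_pos.2 ht.2).ne').const_mul (r : ℝ))
  exact this.congr_deriv (by ring)

lemma exp_logBetaKernel (m r : ℕ) {t : ℝ} (ht : t ∈ Set.Ioo (0 : ℝ) 1) :
    Real.exp (logBetaKernel m r t) = t ^ m * (1 - t) ^ r := by
  rw [logBetaKernel, Real.exp_add, ← Real.log_pow, ← Real.log_pow,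
    Real.exp_log (by simp [ht.1]), Real.exp_log (pow_pos (sub_pos.2 ht.2) r)]

lemma deriv_logBetaKernel_add_sub_nonneg (m r : ℕ) {q s : ℝ} (hq : q ≤ 1 / 2)
    (hmode : r * q ≤ m * (1 - q)) (hs : s ∈ Set.Ioo (-q) q) :
    0 ≤ (m / (q + s) - r / (1 - (q + s))) + (m / (q - s) - r / (1 - (q - s))) := by
  obtain ⟨hs₁, hs₂⟩ := hs
  have hq0 : 0 < q := by linarith
  have h1 : 0 < q + s := by linarith
  have h2 : 0 < q - s := by linarith
  have h3 : 0 < 1 - (q + s) := by linarith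
  have h4 : 0 < 1 - (q - s) := by linarith
  have key : r * (1 - q) * (q ^ 2 - s ^ 2) ≤ m * q * ((1 - q) ^ 2 - s ^ 2) := by
    refine le_of_mul_le_mul_left ?_ hq0
    nlinarith [mul_le_mul_of_nonneg_right hmode
        (mul_nonneg (by linarith) (by nlinarith [mul_pos h1 h2]) :
          (0 : ℝ) ≤ (1 - q) * (q ^ 2 - s ^ 2)),
      mul_nonneg (mul_nonneg (Nat.cast_nonneg m : (0 : ℝ) ≤ m) (sq_nonneg s))
        (by nlinarith : (0 : ℝ) ≤ (1 - q) ^ 2 - q ^ 2)]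
  rw [show m / (q + s) - r / (1 - (q + s)) + (m / (q - s) - r / (1 - (q - s))) =
      2 * (m * q * ((1 - q) ^ 2 - s ^ 2) - r * (1 - q) * (q ^ 2 - s ^ 2)) /
        ((q + s) * (q - s) * (1 - (q + s)) * (1 - (q - s))) by field_simp; ring]
  exact div_nonneg (by linarith) (by positivity)

lemma logBetaKernel_sub_le_add (m r : ℕ) {q s : ℝ} (hq : q ≤ 1 / 2)
    (hmode : r * q ≤ m * (1 - q)) (hs : s ∈ Set.Ioo 0 q) :
    logBetaKernel m r (q - s) ≤ logBetaKernel m r (q + s) := by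
  set φ : ℝ → ℝ := fun x => logBetaKernel m r (q + x) - logBetaKernel m r (q - x)
  have hφ : ∀ x ∈ Set.Ioo (-q) q, HasDerivAt φ
      ((m / (q + x) - r / (1 - (q + x))) + (m / (q - x) - r / (1 - (q - x)))) x := by
    intro x ⟨hx₁, hx₂⟩
    have hplus := (hasDerivAt_logBetaKernel m r (t := q + x) ⟨by linarith, by linarith⟩).comp x
      ((hasDerivAt_id x).const_add q)
    have hminus := (hasDerivAt_logBetaKernel m r (t := q - x) ⟨by linarith, by linarith⟩).comp x
      ((hasDerivAt_id x).const_sub q)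
    exact (hplus.sub hminus).congr_deriv (by ring)
  have hmono : MonotoneOn φ (Set.Ioo (-q) q) := by
    refine monotoneOn_of_deriv_nonneg (convex_Ioo _ _)
      (fun x hx => (hφ x hx).continuousAt.continuousWithinAt)
      (fun x hx => (hφ x (interior_subset hx)).differentiableAt.differentiableWithinAt)
      fun x hx => ?_
    rw [interior_Ioo] at hx
    rw [(hφ x hx).deriv]
    exact deriv_logBetaKernel_add_sub_nonneg m r hq hmode hx
  obtain ⟨hs₀, hsq⟩ := hs
  have := hmono ⟨by linarith, by linarith⟩ ⟨by linarith, hsq⟩ hs₀.le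
  simp only [φ, add_zero, sub_zero, sub_self] at this
  linarith

lemma pow_mul_one_sub_pow_sub_le_add (m r : ℕ) {q s : ℝ} (hq : q ≤ 1 / 2)
    (hmode : r * q ≤ m * (1 - q)) (hs : s ∈ Set.Ioo 0 q) :
    (q - s) ^ m * (1 - (q - s)) ^ r ≤ (q + s) ^ m * (1 - (q + s)) ^ r := by
  obtain ⟨hs₀, hsq⟩ := hs
  rw [← exp_logBetaKernel m r ⟨by linarith, by linarith⟩,
    ← exp_logBetaKernel m r ⟨by linarith, by linarith⟩]
  exact Real.exp_le_exp.2 (logBetaKernel_sub_le_add m r hq hmode ⟨hs₀, hsq⟩)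

lemma intervalIntegral_le_of_reflect_le {f : ℝ → ℝ} (hf : Continuous f) {c d b : ℝ}
    (hd : 0 ≤ d) (hb : c + d ≤ b) (hreflect : ∀ s ∈ Set.Ioo 0 d, f (c - s) ≤ f (c + s))
    (hnonneg : ∀ t ∈ Set.Icc (c + d) b, 0 ≤ f t) :
    ∫ t in (c - d)..c, f t ≤ ∫ t in c..b, f t :=
  calc ∫ t in (c - d)..c, f t
      = ∫ s in 0..d, f (c - s) := by simp [intervalIntegral.integral_comp_sub_left f c]
    _ ≤ ∫ s in 0..d, f (c + s) := intervalIntegral.integral_mono_on_of_le_Ioo hd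
          (Continuous.intervalIntegrable (by fun_prop) 0 d)
          (Continuous.intervalIntegrable (by fun_prop) 0 d) hreflect
    _ = ∫ t in c..(c + d), f t := by simp [intervalIntegral.integral_comp_add_left f c]
    _ ≤ ∫ t in c..b, f t := by
          rw [← intervalIntegral.integral_add_adjacent_intervals (b := c + d) (c := b)
            (hf.intervalIntegrable _ _) (hf.intervalIntegrable _ _)]
          linarith [intervalIntegral.integral_nonneg (μ := MeasureTheory.volume) hb hnonneg]

lemma half_le_binomCDF_mean_of_le_succ (m r : ℕ) (hmr : m ≤ r + 1) :
    1 / 2 ≤ binomCDF (m + r + 1) (m / (m + r + 1 : ℝ)) m := by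
  set q : ℝ := m / (m + r + 1 : ℝ)
  have hn : (0 : ℝ) < m + r + 1 := by positivity
  have hq₀ : 0 ≤ q := by positivity
  have hq : q ≤ 1 / 2 := by
    rw [div_le_iff₀ hn]
    have : (m : ℝ) ≤ r + 1 := by exact_mod_cast hmr
    linarith
  have hmode : r * q ≤ m * (1 - q) := by
    have : q * (m + r + 1) = m := div_mul_cancel₀ _ hn.ne'
    linarith
  have hreflect : ∫ t in 0..q, t ^ m * (1 - t) ^ r ≤ ∫ t in q..1, t ^ m * (1 - t) ^ r := by
    simpa using intervalIntegral_le_of_reflect_le (c := q) (d := q) (b := 1) (by fun_prop) hq₀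
      (by linarith) (fun s hs => pow_mul_one_sub_pow_sub_le_add m r hq hmode hs)
      fun t ht => mul_nonneg (pow_nonneg (by linarith [ht.1]) m)
        (pow_nonneg (by linarith [ht.2]) r)
  have htotal := binomCDF_eq_integral m r 0
  rw [binomCDF_zero, ← intervalIntegral.integral_add_adjacent_intervals (b := q)
    (Continuous.intervalIntegrable (by fun_prop) 0 q)
    (Continuous.intervalIntegrable (by fun_prop) q 1)]
    at htotal
  rw [binomCDF_eq_integral]
  have hC : (0 : ℝ) ≤ (m + r + 1) * (m + r).choose m := by positivity
  nlinarith [mul_le_mul_of_nonneg_left hreflect hC]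

lemma half_le_binomCDF_mean (m r : ℕ) :
    1 / 2 ≤ binomCDF (m + r + 1) (m / (m + r + 1 : ℝ)) m :=
  (le_total r m).elim (half_le_binomCDF_mean_of_le m r)
    fun hmr => half_le_binomCDF_mean_of_le_succ m r (by omega)

theorem binomial_median_le_general (n : ℕ) (p : ℝ) (hp0 : 0 < p)
    (m : ℕ) (hm : (n : ℝ) * p ≤ (m : ℝ)) :
    1 / 2 ≤ binomCDF n p m := by
  rcases le_or_gt n m with hnm | hmn
  · rw [binomCDF_of_le hnm]
    norm_num
  obtain ⟨r, rfl⟩ : ∃ r, n = m + r + 1 := ⟨n - m - 1, by omega⟩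
  have hp : p ≤ m / (m + r + 1 : ℝ) := by
    rw [le_div_iff₀ (by positivity)]
    push_cast at hm
    linarith
  exact (half_le_binomCDF_mean m r).trans <| binomCDF_antitoneOn _ m
    ⟨hp0.le, hp.trans (mean_mem_Icc m r).2⟩ (mean_mem_Icc m r) hp

/-- for n ≥ 1, p ∈ (0,1), S ~ Binomial(n,p) and any integer m ≥ np,
P(S ≤ m) ≥ 1/2 (the median of a binomial distribution is at most ⌈np⌉). -/
theorem binomial_median_le (n : ℕ) (hn : 1 ≤ n) (p : ℝ) (hp0 : 0 < p) (hp1 : p < 1)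
    (m : ℕ) (hm : (n : ℝ) * p ≤ (m : ℝ)) :
    1 / 2 ≤ binomCDF n p m :=
  binomial_median_le_general n p hp0 m hm
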